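/- arXiv:2006.05005 — 3 statements merged into one kernel-verified Lean document; each statement's English description precedes it below -/
import Mathlib

section
/- For p > 1, β₀ > 0, L₀ > 0, t₀ ≥ 0, the infimum over σ ∈ (2L₀/((p−1)β₀) − t₀, ∞) of the expression t₀ + β₀(t₀+σ)²/((p−1)β₀(t₀+σ) − 2L₀) equals t₀ + 8L₀/((p−1)²β₀). -/
/-!
Put `x = t₀ + σ`, `a = (p - 1) β₀` and `c = 2 L₀`. The claim is that `β₀ x² / (a x - c)` has least
value `4 β₀ c / a²` on `x > c / a`, which is AM-GM in the form `a² x² ≥ 4 c (a x - c)`, i.e.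
`(a x - 2 c)² ≥ 0`, with equality at `x = 2 c / a`.
-/

open Set

theorem le_mul_sq_div_sub {a c β x : ℝ} (ha : 0 < a) (hβ : 0 ≤ β) (hx : 0 < a * x - c) :
    4 * β * c / a ^ 2 ≤ β * x ^ 2 / (a * x - c) := by
  rw [div_le_div_iff₀ (by positivity) hx]
  have h : 4 * c * (a * x - c) ≤ a ^ 2 * x ^ 2 := by nlinarith [sq_nonneg (a * x - 2 * c)]
  nlinarith [mul_le_mul_of_nonneg_left h hβ]

theorem mul_sq_div_sub_at_two_mul_div {a c β : ℝ} (ha : a ≠ 0) (hc : c ≠ 0) :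
    β * (2 * c / a) ^ 2 / (a * (2 * c / a) - c) = 4 * β * c / a ^ 2 := by
  have hden : a * (2 * c / a) - c = c := by field_simp; ring
  rw [hden]
  field_simp
  ring

theorem isLeast_image_mul_sq_div_sub {a c β : ℝ} (ha : 0 < a) (hc : 0 < c) (hβ : 0 ≤ β) :
    IsLeast ((fun x => β * x ^ 2 / (a * x - c)) '' Ioi (c / a)) (4 * β * c / a ^ 2) := by
  refine ⟨⟨2 * c / a, ?_, mul_sq_div_sub_at_two_mul_div ha.ne' hc.ne'⟩, ?_⟩
  · exact div_lt_div_of_pos_right (by linarith) ha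
  · rintro _ ⟨x, hx, rfl⟩
    have hx' : 0 < a * x - c := by
      rw [mem_Ioi, div_lt_iff₀ ha] at hx
      linarith
    exact le_mul_sq_div_sub ha hβ hx'

theorem IsLeast.image_Ioi_sub_shift {g : ℝ → ℝ} {r m : ℝ} (t : ℝ) (h : IsLeast (g '' Ioi r) m) :
    IsLeast ((fun σ => t + g (t + σ)) '' Ioi (r - t)) (t + m) := by
  obtain ⟨⟨x, hx, rfl⟩, hlow⟩ := h
  refine ⟨⟨x - t, ?_, by simp⟩, ?_⟩
  · rw [mem_Ioi] at hx ⊢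
    linarith
  · rintro _ ⟨σ, hσ, rfl⟩
    rw [mem_Ioi] at hσ
    have := hlow ⟨t + σ, by rw [mem_Ioi]; linarith, rfl⟩
    linarith

theorem stmt8_general (p β₀ L₀ t₀ : ℝ) (hp : 1 < p) (hβ : 0 < β₀) (hL : 0 < L₀) :
    sInf ((fun σ => t₀ + β₀ * (t₀ + σ) ^ 2 / ((p - 1) * β₀ * (t₀ + σ) - 2 * L₀)) ''
        Set.Ioi (2 * L₀ / ((p - 1) * β₀) - t₀)) =
      t₀ + 8 * L₀ / ((p - 1) ^ 2 * β₀) := by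
  have ha : 0 < (p - 1) * β₀ := mul_pos (by linarith) hβ
  have hmin := isLeast_image_mul_sq_div_sub ha (by linarith : 0 < 2 * L₀) hβ.le
  rw [(hmin.image_Ioi_sub_shift t₀).csInf_eq]
  field_simp
  ring

/-- for `p > 1`, `β₀ > 0`, `L₀ > 0`, `t₀ ≥ 0`, the infimum over
`σ ∈ (2L₀/((p−1)β₀) − t₀, ∞)` of `t₀ + β₀(t₀+σ)²/((p−1)β₀(t₀+σ) − 2L₀)`
equals `t₀ + 8L₀/((p−1)²β₀)`. -/
theorem stmt8 (p β₀ L₀ t₀ : ℝ) (hp : 1 < p) (hβ : 0 < β₀) (hL : 0 < L₀) (ht : 0 ≤ t₀) :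
    sInf ((fun σ => t₀ + β₀ * (t₀ + σ) ^ 2 / ((p - 1) * β₀ * (t₀ + σ) - 2 * L₀)) ''
        Set.Ioi (2 * L₀ / ((p - 1) * β₀) - t₀)) =
      t₀ + 8 * L₀ / ((p - 1) ^ 2 * β₀) :=
  stmt8_general p β₀ L₀ t₀ hp hβ hL
end

section
/- Let θ > 0, ψ : [t₀, t₁] → (0, ∞) twice differentiable with ψ''ψ − (1+θ)(ψ')² ≥ 0 on [t₀, t₁], ψ(t₀) > 0, ψ'(t₀) > 0. Then the function φ(t) = ψ(t)^{−θ} is concave on [t₀, t₁] with φ'(t₀) < 0; consequently ψ'(t) > 0 for all t ∈ [t₀, t₁] and ψ(t) ≥ ψ(t₀) (1 − θ ψ'(t₀)(t − t₀)/ψ(t₀))^{−1/θ} whenever the right-hand side is defined. -/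
/-! For `φ = ψ ^ (-θ)` one computes `φ'' = -θ ψ ^ (-θ - 2) (ψ''ψ - (1 + θ) ψ'²)`, so the hypothesis
makes `φ` concave, and `φ'(t₀) = -θ ψ'(t₀) ψ(t₀) ^ (-θ - 1) < 0`. The hypothesis
also forces `ψ'' ≥ 0`, whence `ψ' ≥ ψ'(t₀) > 0`. Finally `φ` lies below its tangent line at `t₀`,
`φ(t) ≤ ψ(t₀) ^ (-θ) (1 - θ ψ'(t₀)(t - t₀) / ψ(t₀))`, and raising this to the power `-1/θ`
gives the lower bound for `ψ`. -/

open Set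

section RpowDeriv

variable {ψ : ℝ → ℝ} {p t : ℝ}

lemma hasDerivAt_rpow_const_of_pos (h1 : DifferentiableAt ℝ ψ t) (hψ : 0 < ψ t) :
    HasDerivAt (fun s => ψ s ^ p) (deriv ψ t * p * ψ t ^ (p - 1)) t :=
  h1.hasDerivAt.rpow_const (Or.inl hψ.ne')

lemma hasDerivAt_deriv_mul_rpow_const (h1 : DifferentiableAt ℝ ψ t)
    (h2 : DifferentiableAt ℝ (deriv ψ) t) (hψ : 0 < ψ t) :
    HasDerivAt (fun s => deriv ψ s * p * ψ s ^ (p - 1))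
      (p * ψ t ^ (p - 2) * (deriv (deriv ψ) t * ψ t + (p - 1) * deriv ψ t ^ 2)) t := by
  refine ((h2.hasDerivAt.mul_const p).mul
    (hasDerivAt_rpow_const_of_pos (p := p - 1) h1 hψ)).congr_deriv ?_
  rw [show p - 1 - 1 = p - 2 by ring, show p - 1 = p - 2 + 1 by ring,
    Real.rpow_add_one hψ.ne']
  ring

end RpowDeriv

section ConcavityInequality

variable {D : Set ℝ} {ψ : ℝ → ℝ} {θ : ℝ}

theorem concaveOn_rpow_neg (hD : Convex ℝ D) (hθ : 0 ≤ θ) (hpos : ∀ t ∈ D, 0 < ψ t)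
    (hd1 : ∀ t ∈ D, DifferentiableAt ℝ ψ t) (hd2 : ∀ t ∈ D, DifferentiableAt ℝ (deriv ψ) t)
    (hineq : ∀ t ∈ D, 0 ≤ deriv (deriv ψ) t * ψ t - (1 + θ) * deriv ψ t ^ 2) :
    ConcaveOn ℝ D (fun t => ψ t ^ (-θ)) := by
  refine concaveOn_of_hasDerivWithinAt2_nonpos hD
    (fun t ht => (hasDerivAt_rpow_const_of_pos (hd1 t ht) (hpos t ht)).continuousAt
      |>.continuousWithinAt)
    (fun t ht => (hasDerivAt_rpow_const_of_pos (hd1 t (interior_subset ht))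
      (hpos t (interior_subset ht))).hasDerivWithinAt)
    (fun t ht => (hasDerivAt_deriv_mul_rpow_const (hd1 t (interior_subset ht))
      (hd2 t (interior_subset ht)) (hpos t (interior_subset ht))).hasDerivWithinAt)
    fun t ht => ?_
  have ht := interior_subset ht
  have hφ'' : -θ * ψ t ^ (-θ - 2) * (deriv (deriv ψ) t * ψ t + (-θ - 1) * deriv ψ t ^ 2) =
      -(θ * ψ t ^ (-θ - 2) * (deriv (deriv ψ) t * ψ t - (1 + θ) * deriv ψ t ^ 2)) := by ring
  rw [hφ'', neg_nonpos]
  exact mul_nonneg (mul_nonneg hθ (Real.rpow_nonneg (hpos t ht).le _)) (hineq t ht)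

theorem monotoneOn_deriv_of_mul_deriv2_sub_nonneg (hD : Convex ℝ D) (hθ : -1 ≤ θ)
    (hpos : ∀ t ∈ D, 0 < ψ t) (hd2 : ∀ t ∈ D, DifferentiableAt ℝ (deriv ψ) t)
    (hineq : ∀ t ∈ D, 0 ≤ deriv (deriv ψ) t * ψ t - (1 + θ) * deriv ψ t ^ 2) :
    MonotoneOn (deriv ψ) D := by
  refine monotoneOn_of_hasDerivWithinAt_nonneg hD
    (fun t ht => (hd2 t ht).continuousAt.continuousWithinAt)
    (fun t ht => (hd2 t (interior_subset ht)).hasDerivAt.hasDerivWithinAt) fun t ht => ?_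
  have ht := interior_subset ht
  have hsq : 0 ≤ (1 + θ) * deriv ψ t ^ 2 := mul_nonneg (by linarith) (sq_nonneg _)
  exact nonneg_of_mul_nonneg_left (by linarith [hineq t ht]) (hpos t ht)

end ConcavityInequality

theorem ConcaveOn.le_add_mul_sub_of_hasDerivAt {S : Set ℝ} {f : ℝ → ℝ} {f' x y : ℝ}
    (hf : ConcaveOn ℝ S f) (hx : x ∈ S) (hy : y ∈ S) (hxy : x ≤ y) (hf' : HasDerivAt f f' x) :
    f y ≤ f x + f' * (y - x) := by
  rcases hxy.eq_or_lt with rfl | hlt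
  · simp
  have hslope := hf.slope_le_of_hasDerivAt hx hy hlt hf'
  rw [slope_def_field, div_le_iff₀ (sub_pos.2 hlt)] at hslope
  linarith

theorem mul_rpow_neg_inv_le_of_rpow_neg_le_mul {x y B θ : ℝ} (hx : 0 < x) (hy : 0 < y)
    (hB : 0 < B) (hθ : 0 < θ) (h : x ^ (-θ) ≤ y ^ (-θ) * B) :
    y * B ^ (-(1 / θ)) ≤ x := by
  have hB' : (B ^ (-(1 / θ))) ^ (-θ) = B := by
    rw [← Real.rpow_mul hB.le, show -(1 / θ) * -θ = 1 by field_simp, Real.rpow_one]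
  rwa [← Real.rpow_le_rpow_iff_of_neg hx (by positivity) (neg_lt_zero.2 hθ),
    Real.mul_rpow hy.le (by positivity), hB']

/-- under the concavity inequality `ψ''ψ − (1+θ)(ψ')² ≥ 0` on `[t₀,t₁]` with
`ψ > 0`, `ψ'(t₀) > 0`, the function `φ = ψ^{−θ}` is concave on `[t₀,t₁]` with `φ'(t₀) < 0`;
moreover `ψ' > 0` on `[t₀,t₁]` and `ψ(t) ≥ ψ(t₀)(1 − θψ'(t₀)(t−t₀)/ψ(t₀))^{−1/θ}`
whenever the base is positive. -/
theorem stmt17 (θ t₀ t₁ : ℝ) (hθ : 0 < θ) (ht : t₀ < t₁) (ψ : ℝ → ℝ)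
    (hpos : ∀ t ∈ Set.Icc t₀ t₁, 0 < ψ t)
    (hd1 : ∀ t ∈ Set.Icc t₀ t₁, DifferentiableAt ℝ ψ t)
    (hd2 : ∀ t ∈ Set.Icc t₀ t₁, DifferentiableAt ℝ (deriv ψ) t)
    (hineq : ∀ t ∈ Set.Icc t₀ t₁, 0 ≤ deriv (deriv ψ) t * ψ t - (1 + θ) * (deriv ψ t) ^ 2)
    (hψ0' : 0 < deriv ψ t₀) :
    ConcaveOn ℝ (Set.Icc t₀ t₁) (fun t => ψ t ^ (-θ)) ∧
    deriv (fun t => ψ t ^ (-θ)) t₀ < 0 ∧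
    (∀ t ∈ Set.Icc t₀ t₁, 0 < deriv ψ t) ∧
    (∀ t ∈ Set.Icc t₀ t₁, 0 < 1 - θ * deriv ψ t₀ * (t - t₀) / ψ t₀ →
      ψ t₀ * (1 - θ * deriv ψ t₀ * (t - t₀) / ψ t₀) ^ (-(1 / θ)) ≤ ψ t) := by
  have ht₀ : t₀ ∈ Icc t₀ t₁ := left_mem_Icc.2 ht.le
  have hψ₀ := hpos t₀ ht₀
  have hφ' := hasDerivAt_rpow_const_of_pos (p := -θ) (hd1 t₀ ht₀) hψ₀
  have hφ'_neg : deriv ψ t₀ * -θ * ψ t₀ ^ (-θ - 1) < 0 :=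
    mul_neg_of_neg_of_pos (mul_neg_of_pos_of_neg hψ0' (neg_lt_zero.2 hθ))
      (Real.rpow_pos_of_pos hψ₀ _)
  have hconc := concaveOn_rpow_neg (convex_Icc t₀ t₁) hθ.le hpos hd1 hd2 hineq
  have hmono := monotoneOn_deriv_of_mul_deriv2_sub_nonneg (convex_Icc t₀ t₁)
    (by linarith) hpos hd2 hineq
  refine ⟨hconc, hφ'.deriv ▸ hφ'_neg, fun t ht => hψ0'.trans_le (hmono ht₀ ht ht.1), ?_⟩
  intro t ht hB
  refine mul_rpow_neg_inv_le_of_rpow_neg_le_mul (hpos t ht) hψ₀ hB hθ ?_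
  calc ψ t ^ (-θ) ≤ ψ t₀ ^ (-θ) + deriv ψ t₀ * -θ * ψ t₀ ^ (-θ - 1) * (t - t₀) :=
        hconc.le_add_mul_sub_of_hasDerivAt ht₀ ht ht.1 hφ'
    _ = ψ t₀ ^ (-θ) * (1 - θ * deriv ψ t₀ * (t - t₀) / ψ t₀) := by
        rw [Real.rpow_sub_one hψ₀.ne']
        field_simp
        ring
end

section
/- Let p > 1 and suppose L : [0, T*) → (0, ∞) is differentiable, K : [0, T*) → ℝ is differentiable with K(0) > 0 and K'(t) ≥ 0, L'(t) ≥ (p+1)K(t), and L(t)K'(t) ≥ ((p+1)/2) L'(t)K(t) for all t. Then L blows up no later than T* ≤ 2 L(0)/((p²−1)K(0)), i.e., L cannot be extended as a finite differentiable function past that time. -/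
/-!
With `a = (p+1)/2`, the hypothesis `L K' ≥ a L' K` says exactly that `K L^{-a}` is nondecreasing,
so `K ≥ c L^a` with `c = K(0) L(0)^{-a}`. Then `L' ≥ (p+1) c L^{1+q}` with `q = (p-1)/2`, and this
superlinear growth forces `L^{-q}` to decrease at rate at least `q (p+1) c`; since `L^{-q}` stays
positive, the time available is at most `L(0)^{-q} / (q (p+1) c) = 2 L(0) / ((p²-1) K(0))`.
-/

open Set

theorem monotoneOn_of_hasDerivAt_nonneg {s : Set ℝ} (hs : Convex ℝ s) {f f' : ℝ → ℝ}
    (hf : ∀ x ∈ s, HasDerivAt f (f' x) x) (hf' : ∀ x ∈ s, 0 ≤ f' x) : MonotoneOn f s :=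
  monotoneOn_of_hasDerivWithinAt_nonneg hs (fun x hx ↦ (hf x hx).continuousAt.continuousWithinAt)
    (fun x hx ↦ (hf x (interior_subset hx)).hasDerivWithinAt)
    (fun x hx ↦ hf' x (interior_subset hx))

theorem antitoneOn_of_hasDerivAt_nonpos {s : Set ℝ} (hs : Convex ℝ s) {f f' : ℝ → ℝ}
    (hf : ∀ x ∈ s, HasDerivAt f (f' x) x) (hf' : ∀ x ∈ s, f' x ≤ 0) : AntitoneOn f s :=
  antitoneOn_of_hasDerivWithinAt_nonpos hs (fun x hx ↦ (hf x hx).continuousAt.continuousWithinAt)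
    (fun x hx ↦ (hf x (interior_subset hx)).hasDerivWithinAt)
    (fun x hx ↦ hf' x (interior_subset hx))

-- The derivative of `K L^{-a}` is `L^{-a-1} (L K' - a L' K)`.
theorem monotoneOn_mul_rpow_neg {s : Set ℝ} (hs : Convex ℝ s) {a : ℝ} {K L : ℝ → ℝ}
    (hKd : ∀ t ∈ s, DifferentiableAt ℝ K t) (hLd : ∀ t ∈ s, DifferentiableAt ℝ L t)
    (hLpos : ∀ t ∈ s, 0 < L t) (h : ∀ t ∈ s, a * deriv L t * K t ≤ L t * deriv K t) :
    MonotoneOn (fun t ↦ K t * L t ^ (-a)) s := by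
  refine monotoneOn_of_hasDerivAt_nonneg hs
    (fun t ht ↦ (hKd t ht).hasDerivAt.mul ((hLd t ht).hasDerivAt.rpow_const
      (Or.inl (hLpos t ht).ne'))) fun t ht ↦ ?_
  have hsplit : L t ^ (-a) = L t ^ (-a - 1) * L t := by
    rw [← Real.rpow_add_one (hLpos t ht).ne', sub_add_cancel]
  have hpos : 0 ≤ L t ^ (-a - 1) := (Real.rpow_pos_of_pos (hLpos t ht) _).le
  rw [hsplit]
  nlinarith [mul_le_mul_of_nonneg_left (h t ht) hpos]

theorem mul_rpow_le_of_monotoneOn_mul_rpow_neg {s : Set ℝ} {a : ℝ} {K L : ℝ → ℝ}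
    (hLpos : ∀ t ∈ s, 0 < L t) (hmono : MonotoneOn (fun t ↦ K t * L t ^ (-a)) s)
    {x y : ℝ} (hx : x ∈ s) (hy : y ∈ s) (hxy : x ≤ y) :
    K x * L x ^ (-a) * L y ^ a ≤ K y := by
  calc K x * L x ^ (-a) * L y ^ a ≤ K y * L y ^ (-a) * L y ^ a :=
        mul_le_mul_of_nonneg_right (hmono hx hy hxy) (Real.rpow_nonneg (hLpos y hy).le _)
    _ = K y := by
        rw [mul_assoc, ← Real.rpow_add (hLpos y hy), neg_add_cancel, Real.rpow_zero, mul_one]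

-- `L^{-q} + q C t` is nonincreasing, and `L^{-q}` stays positive.
theorem le_rpow_neg_div_of_mul_rpow_le_deriv {T q C : ℝ} {L : ℝ → ℝ} (hT : 0 < T)
    (hq : 0 < q) (hC : 0 < C) (hLd : ∀ t ∈ Ico 0 T, DifferentiableAt ℝ L t)
    (hLpos : ∀ t ∈ Ico 0 T, 0 < L t) (h : ∀ t ∈ Ico 0 T, C * L t ^ (1 + q) ≤ deriv L t) :
    T ≤ L 0 ^ (-q) / (q * C) := by
  have h0 : (0 : ℝ) ∈ Ico 0 T := ⟨le_rfl, hT⟩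
  have hanti : AntitoneOn (fun t ↦ L t ^ (-q) + q * C * t) (Ico 0 T) := by
    refine antitoneOn_of_hasDerivAt_nonpos (convex_Ico 0 T)
      (fun t ht ↦ ((hLd t ht).hasDerivAt.rpow_const (Or.inl (hLpos t ht).ne')).add
        ((hasDerivAt_id t).const_mul (q * C))) fun t ht ↦ ?_
    have hcancel : L t ^ (1 + q) * L t ^ (-q - 1) = 1 := by
      rw [← Real.rpow_add (hLpos t ht), show 1 + q + (-q - 1) = 0 by ring, Real.rpow_zero]
    have hC_le : C ≤ deriv L t * L t ^ (-q - 1) :=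
      calc C = C * L t ^ (1 + q) * L t ^ (-q - 1) := by rw [mul_assoc, hcancel, mul_one]
        _ ≤ deriv L t * L t ^ (-q - 1) :=
          mul_le_mul_of_nonneg_right (h t ht) (Real.rpow_pos_of_pos (hLpos t ht) _).le
    nlinarith [mul_le_mul_of_nonneg_left hC_le hq.le]
  have hbound : ∀ t ∈ Ico 0 T, q * C * t < L 0 ^ (-q) := fun t ht ↦ by
    have hle : L t ^ (-q) + q * C * t ≤ L 0 ^ (-q) + q * C * 0 := hanti h0 ht ht.1
    linarith [Real.rpow_pos_of_pos (hLpos t ht) (-q)]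
  refine le_of_forall_lt_imp_le_of_dense fun t ht ↦ ?_
  rcases lt_or_ge t 0 with ht0 | ht0
  · exact ht0.le.trans (div_pos (Real.rpow_pos_of_pos (hLpos 0 h0) _) (mul_pos hq hC)).le
  · rw [le_div_iff₀ (mul_pos hq hC)]
    linarith [hbound t ⟨ht0, ht⟩]

theorem stmt19_general (p T : ℝ) (hp : 1 < p) (hT : 0 < T) (L K : ℝ → ℝ)
    (hLd : ∀ t ∈ Set.Ico 0 T, DifferentiableAt ℝ L t)
    (hKd : ∀ t ∈ Set.Ico 0 T, DifferentiableAt ℝ K t)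
    (hLpos : ∀ t ∈ Set.Ico 0 T, 0 < L t)
    (hK0 : 0 < K 0)
    (h1 : ∀ t ∈ Set.Ico 0 T, (p + 1) * K t ≤ deriv L t)
    (h2 : ∀ t ∈ Set.Ico 0 T, (p + 1) / 2 * deriv L t * K t ≤ L t * deriv K t) :
    T ≤ 2 * L 0 / ((p ^ 2 - 1) * K 0) := by
  have h0 : (0 : ℝ) ∈ Ico 0 T := ⟨le_rfl, hT⟩
  have hL0 := hLpos 0 h0
  set C := (p + 1) * (K 0 * L 0 ^ (-((p + 1) / 2))) with hC_def
  have hKlow : ∀ t ∈ Ico 0 T, K 0 * L 0 ^ (-((p + 1) / 2)) * L t ^ ((p + 1) / 2) ≤ K t :=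
    fun t ht ↦ mul_rpow_le_of_monotoneOn_mul_rpow_neg hLpos
      (monotoneOn_mul_rpow_neg (convex_Ico 0 T) hKd hLd hLpos h2) h0 ht ht.1
  have hgrowth : ∀ t ∈ Ico 0 T, C * L t ^ (1 + (p - 1) / 2) ≤ deriv L t := fun t ht ↦ by
    rw [show 1 + (p - 1) / 2 = (p + 1) / 2 by ring, mul_assoc]
    exact (mul_le_mul_of_nonneg_left (hKlow t ht) (by linarith)).trans (h1 t ht)
  have hC : 0 < C := by positivity
  calc T ≤ L 0 ^ (-((p - 1) / 2)) / ((p - 1) / 2 * C) :=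
        le_rpow_neg_div_of_mul_rpow_le_deriv hT (by linarith) hC hLd hLpos hgrowth
    _ = 2 * L 0 / ((p ^ 2 - 1) * K 0) := by
        have hp1 : p - 1 ≠ 0 := by linarith
        have hp2 : p ^ 2 - 1 ≠ 0 := by nlinarith
        rw [hC_def, show -((p - 1) / 2) = 1 + -((p + 1) / 2) by ring, Real.rpow_add hL0,
          Real.rpow_one]
        field_simp [(Real.rpow_pos_of_pos hL0 (-((p + 1) / 2))).ne']
        ring

/-- if `L > 0` and `K` are differentiable on `[0,T*)` with `K(0) > 0`, `K' ≥ 0`,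
`L' ≥ (p+1)K`, and `LK' ≥ ((p+1)/2)L'K` (`p > 1`), then `T* ≤ 2L(0)/((p²−1)K(0))`. -/
theorem stmt19 (p T : ℝ) (hp : 1 < p) (hT : 0 < T) (L K : ℝ → ℝ)
    (hLd : ∀ t ∈ Set.Ico 0 T, DifferentiableAt ℝ L t)
    (hKd : ∀ t ∈ Set.Ico 0 T, DifferentiableAt ℝ K t)
    (hLpos : ∀ t ∈ Set.Ico 0 T, 0 < L t)
    (hK0 : 0 < K 0)
    (hK' : ∀ t ∈ Set.Ico 0 T, 0 ≤ deriv K t)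
    (h1 : ∀ t ∈ Set.Ico 0 T, (p + 1) * K t ≤ deriv L t)
    (h2 : ∀ t ∈ Set.Ico 0 T, (p + 1) / 2 * deriv L t * K t ≤ L t * deriv K t) :
    T ≤ 2 * L 0 / ((p ^ 2 - 1) * K 0) :=
  stmt19_general p T hp hT L K hLd hKd hLpos hK0 h1 h2
end
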